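/- Let (A,C)_ψ be the canonical entwining structure of a coalgebra-Galois extension B ⊆ A with bijective canonical map can : A ⊗_B A → A ⊗ C. An element x = Σ aᵢ ⊗ cᵢ ∈ A ⊗ C is an integral in (A,C)_ψ (i.e. a·x = x·a for all a, where x·a = Σ aᵢψ(cᵢ⊗a)) if and only if the element x^τ = Σ aᵢ·can^{-1}(1⊗cᵢ) ∈ A ⊗_B A is central for the (A,A)-bimodule structure: a·x^τ = x^τ·a for all a ∈ A. -/

import Mathlib

open TensorProduct LinearMap

noncomputable section

variable (k A C : Type*) [CommRing k] [Ring A] [Algebra k A]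
  [AddCommGroup C] [Module k C] [Coalgebra k C]

/-- An entwining structure `(A,C)_ψ` over `k`. -/
structure Entwining where
  psi : C ⊗[k] A →ₗ[k] A ⊗[k] C
  mul_compat :
    psi ∘ₗ lTensor C (LinearMap.mul' k A)
      = rTensor C (LinearMap.mul' k A)
        ∘ₗ (TensorProduct.assoc k A A C).symm.toLinearMap
        ∘ₗ lTensor A psi
        ∘ₗ (TensorProduct.assoc k A C A).toLinearMap
        ∘ₗ rTensor A psi
        ∘ₗ (TensorProduct.assoc k C A A).symm.toLinearMap
  one_compat : ∀ c : C, psi (c ⊗ₜ[k] (1 : A)) = (1 : A) ⊗ₜ[k] c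
  comul_compat :
    lTensor A (Coalgebra.comul (R := k) (A := C)) ∘ₗ psi
      = (TensorProduct.assoc k A C C).toLinearMap
        ∘ₗ rTensor C psi
        ∘ₗ (TensorProduct.assoc k C A C).symm.toLinearMap
        ∘ₗ lTensor C psi
        ∘ₗ (TensorProduct.assoc k C C A).toLinearMap
        ∘ₗ rTensor A (Coalgebra.comul (R := k) (A := C))
  counit_compat : ∀ (c : C) (a : A),
    (TensorProduct.rid k A)
        ((lTensor A (Coalgebra.counit (R := k) (A := C))) (psi (c ⊗ₜ[k] a)))
      = Coalgebra.counit (R := k) c • a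

variable {k A C} in
/-- `act` is a unital associative right `A`-action on `M`. -/
def IsRAction {M : Type*} [AddCommGroup M] [Module k M]
    (act : M ⊗[k] A →ₗ[k] M) : Prop :=
  (∀ m : M, act (m ⊗ₜ[k] (1 : A)) = m) ∧
  act ∘ₗ lTensor M (LinearMap.mul' k A)
    = act ∘ₗ rTensor A act ∘ₗ (TensorProduct.assoc k M A A).symm.toLinearMap

variable {k A C} in
/-- `coact` is a counital coassociative right `C`-coaction on `M`. -/
def IsRCoaction {M : Type*} [AddCommGroup M] [Module k M]
    (coact : M →ₗ[k] M ⊗[k] C) : Prop :=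
  (∀ m : M, (TensorProduct.rid k M)
      ((lTensor M (Coalgebra.counit (R := k) (A := C))) (coact m)) = m) ∧
  rTensor C coact ∘ₗ coact
    = (TensorProduct.assoc k M C C).symm.toLinearMap
      ∘ₗ lTensor M (Coalgebra.comul (R := k) (A := C)) ∘ₗ coact

variable {k A C} in
/-- The compatibility condition making `(M, act, coact)` an entwined
`(A,C)_ψ`-module: `ρ^M(m·a) = m₍₀₎·a_α ⊗ m₍₁₎^α`. -/
def IsEntwinedModule (E : Entwining k A C) {M : Type*} [AddCommGroup M] [Module k M]
    (act : M ⊗[k] A →ₗ[k] M) (coact : M →ₗ[k] M ⊗[k] C) : Prop :=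
  IsRAction act ∧ IsRCoaction coact ∧
  coact ∘ₗ act
    = rTensor C act
      ∘ₗ (TensorProduct.assoc k M A C).symm.toLinearMap
      ∘ₗ lTensor M E.psi
      ∘ₗ (TensorProduct.assoc k M C A).toLinearMap
      ∘ₗ rTensor A coact

variable {k A C} in
/-- A morphism of entwined modules: right `A`-linear and right `C`-colinear. -/
def IsEntwinedHom {M N : Type*} [AddCommGroup M] [Module k M]
    [AddCommGroup N] [Module k N]
    (actM : M ⊗[k] A →ₗ[k] M) (coactM : M →ₗ[k] M ⊗[k] C)
    (actN : N ⊗[k] A →ₗ[k] N) (coactN : N →ₗ[k] N ⊗[k] C)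
    (f : M →ₗ[k] N) : Prop :=
  (f ∘ₗ actM = actN ∘ₗ rTensor A f) ∧ (coactN ∘ₗ f = rTensor C f ∘ₗ coactM)

variable {k A C} in
/-- The submodule of `A ⊗ A` by which one divides to get `A ⊗_B A`, where
`B = {b ∈ A | ρ^A(ba) = b ρ^A(a)}`: it is spanned by the elements
`(a b) ⊗ a' - a ⊗ (b a')` for `b ∈ B`. -/
def galRel (ρA : A →ₗ[k] A ⊗[k] C) : Submodule k (A ⊗[k] A) :=
  Submodule.span k
    {x : A ⊗[k] A | ∃ b : A,
      (∀ a : A, ρA (b * a) = rTensor C (LinearMap.mulLeft k b) (ρA a)) ∧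
      ∃ a a' : A, x = (a * b) ⊗ₜ[k] a' - a ⊗ₜ[k] (b * a')}

/-! `can` is left `A`-linear and `can (x^τ) = x`, so it carries `a · x^τ` to `a · x`; and since
left and right multiplication on `A ⊗_B A` commute, it carries `x^τ · a` to `x · a`. As `can` is
injective, the two conditions correspond. -/

section Galois

variable {k A C : Type*} [CommRing k] [Ring A] [Algebra k A] [AddCommGroup C] [Module k C]

theorem rTensor_mul'_assoc_symm_tmul (a : A) (w : A ⊗[k] C) :
    rTensor C (LinearMap.mul' k A) ((TensorProduct.assoc k A A C).symm (a ⊗ₜ[k] w))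
      = rTensor C (LinearMap.mulLeft k a) w := by
  induction w using TensorProduct.induction_on with
  | zero => simp
  | tmul u c => simp
  | add w w' hw hw' => simp only [tmul_add, map_add, hw, hw']

def entwiningRightAction (ψ : C ⊗[k] A →ₗ[k] A ⊗[k] C) : (A ⊗[k] C) ⊗[k] A →ₗ[k] A ⊗[k] C :=
  rTensor C (LinearMap.mul' k A) ∘ₗ (TensorProduct.assoc k A A C).symm.toLinearMap
    ∘ₗ lTensor A ψ ∘ₗ (TensorProduct.assoc k A C A).toLinearMap

theorem entwiningRightAction_tmul_tmul (ψ : C ⊗[k] A →ₗ[k] A ⊗[k] C) (a : A) (c : C) (a' : A) :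
    entwiningRightAction ψ ((a ⊗ₜ[k] c) ⊗ₜ[k] a')
      = rTensor C (LinearMap.mulLeft k a) (ψ (c ⊗ₜ[k] a')) :=
  rTensor_mul'_assoc_symm_tmul a _

variable {N : Submodule k (A ⊗[k] A)}

theorem lact_act_comm
    {act : ((A ⊗[k] A) ⧸ N) ⊗[k] A →ₗ[k] (A ⊗[k] A) ⧸ N}
    (hact : ∀ (y : A ⊗[k] A) (a : A),
      act (N.mkQ y ⊗ₜ[k] a) = N.mkQ (lTensor A (LinearMap.mulRight k a) y))
    {lact : A ⊗[k] ((A ⊗[k] A) ⧸ N) →ₗ[k] (A ⊗[k] A) ⧸ N}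
    (hlact : ∀ (a : A) (y : A ⊗[k] A),
      lact (a ⊗ₜ[k] N.mkQ y) = N.mkQ (rTensor A (LinearMap.mulLeft k a) y))
    (a b : A) (q : (A ⊗[k] A) ⧸ N) :
    lact (a ⊗ₜ[k] act (q ⊗ₜ[k] b)) = act (lact (a ⊗ₜ[k] q) ⊗ₜ[k] b) := by
  obtain ⟨y, rfl⟩ := N.mkQ_surjective q
  rw [hact, hlact, hlact, hact, ← LinearMap.comp_apply (rTensor A _),
    ← LinearMap.comp_apply (lTensor A _), rTensor_comp_lTensor, lTensor_comp_rTensor]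

theorem can_lact {ρ : A →ₗ[k] A ⊗[k] C} {can : ((A ⊗[k] A) ⧸ N) →ₗ[k] A ⊗[k] C}
    (hcan : ∀ a a' : A, can (N.mkQ (a ⊗ₜ[k] a')) = rTensor C (LinearMap.mulLeft k a) (ρ a'))
    {lact : A ⊗[k] ((A ⊗[k] A) ⧸ N) →ₗ[k] (A ⊗[k] A) ⧸ N}
    (hlact : ∀ (a : A) (y : A ⊗[k] A),
      lact (a ⊗ₜ[k] N.mkQ y) = N.mkQ (rTensor A (LinearMap.mulLeft k a) y))
    (a : A) (q : (A ⊗[k] A) ⧸ N) :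
    can (lact (a ⊗ₜ[k] q)) = rTensor C (LinearMap.mulLeft k a) (can q) := by
  obtain ⟨y, rfl⟩ := N.mkQ_surjective q
  rw [hlact]
  induction y using TensorProduct.induction_on with
  | zero => simp
  | tmul u v =>
    rw [rTensor_tmul, hcan, hcan, LinearMap.mulLeft_apply, LinearMap.mulLeft_mul, rTensor_comp,
      LinearMap.comp_apply]
  | add y z hy hz => simp only [map_add, hy, hz]

def translationMap {Q : Type*} [AddCommGroup Q] [Module k Q] (can : Q ≃ₗ[k] A ⊗[k] C) :
    C →ₗ[k] Q :=
  can.symm.toLinearMap ∘ₗ TensorProduct.mk k A C 1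

def canonicalEntwining {Q : Type*} [AddCommGroup Q] [Module k Q] (can : Q ≃ₗ[k] A ⊗[k] C)
    (act : Q ⊗[k] A →ₗ[k] Q) : C ⊗[k] A →ₗ[k] A ⊗[k] C :=
  can.toLinearMap ∘ₗ act ∘ₗ rTensor A (translationMap can)

variable {ρ : A →ₗ[k] A ⊗[k] C} {can : ((A ⊗[k] A) ⧸ N) ≃ₗ[k] A ⊗[k] C}
  {act : ((A ⊗[k] A) ⧸ N) ⊗[k] A →ₗ[k] (A ⊗[k] A) ⧸ N}
  {lact : A ⊗[k] ((A ⊗[k] A) ⧸ N) →ₗ[k] (A ⊗[k] A) ⧸ N}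

theorem can_lact_translationMap
    (hcan : ∀ a a' : A, can (N.mkQ (a ⊗ₜ[k] a')) = rTensor C (LinearMap.mulLeft k a) (ρ a'))
    (hlact : ∀ (a : A) (y : A ⊗[k] A),
      lact (a ⊗ₜ[k] N.mkQ y) = N.mkQ (rTensor A (LinearMap.mulLeft k a) y))
    (x : A ⊗[k] C) :
    can (lact (lTensor A (translationMap can) x)) = x := by
  induction x using TensorProduct.induction_on with
  | zero => simp
  | tmul a c =>
    rw [lTensor_tmul]
    exact (can_lact (can := can.toLinearMap) hcan hlact a _).trans (by simp [translationMap])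
  | add x y hx hy => simp only [map_add, hx, hy]

theorem entwiningRightAction_canonicalEntwining
    (hcan : ∀ a a' : A, can (N.mkQ (a ⊗ₜ[k] a')) = rTensor C (LinearMap.mulLeft k a) (ρ a'))
    (hact : ∀ (y : A ⊗[k] A) (a : A),
      act (N.mkQ y ⊗ₜ[k] a) = N.mkQ (lTensor A (LinearMap.mulRight k a) y))
    (hlact : ∀ (a : A) (y : A ⊗[k] A),
      lact (a ⊗ₜ[k] N.mkQ y) = N.mkQ (rTensor A (LinearMap.mulLeft k a) y))
    (x : A ⊗[k] C) (a : A) :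
    entwiningRightAction (canonicalEntwining can act) (x ⊗ₜ[k] a)
      = can (act (lact (lTensor A (translationMap can) x) ⊗ₜ[k] a)) := by
  induction x using TensorProduct.induction_on with
  | zero => simp
  | tmul a' c =>
    rw [entwiningRightAction_tmul_tmul, lTensor_tmul, ← lact_act_comm hact hlact]
    exact (can_lact (can := can.toLinearMap) hcan hlact _ _).symm
  | add x y hx hy => simp only [add_tmul, map_add, hx, hy]

end Galois

theorem galois_integral_iff_central
    (ρA : A →ₗ[k] A ⊗[k] C)
    -- the canonical map `can : A ⊗_B A → A ⊗ C`, `a ⊗ a' ↦ a ρ^A(a')`,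
    -- assumed bijective:
    (canE : ((A ⊗[k] A) ⧸ galRel ρA) ≃ₗ[k] A ⊗[k] C)
    (hcan : ∀ a a' : A,
      canE ((galRel ρA).mkQ (a ⊗ₜ[k] a'))
        = rTensor C (LinearMap.mulLeft k a) (ρA a'))
    -- the right `A`-action on `A ⊗_B A` (multiplication in the second factor):
    (actQ : ((A ⊗[k] A) ⧸ galRel ρA) ⊗[k] A →ₗ[k] ((A ⊗[k] A) ⧸ galRel ρA))
    (hactQ : ∀ (y : A ⊗[k] A) (a : A),
      actQ ((galRel ρA).mkQ y ⊗ₜ[k] a)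
        = (galRel ρA).mkQ (lTensor A (LinearMap.mulRight k a) y))
    -- the left `A`-action on `A ⊗_B A` (multiplication in the first factor):
    (lactQ : A ⊗[k] ((A ⊗[k] A) ⧸ galRel ρA) →ₗ[k] ((A ⊗[k] A) ⧸ galRel ρA))
    (hlactQ : ∀ (a : A) (y : A ⊗[k] A),
      lactQ (a ⊗ₜ[k] (galRel ρA).mkQ y)
        = (galRel ρA).mkQ (rTensor A (LinearMap.mulLeft k a) y)) :
    -- the canonical entwining map `ψ(c ⊗ a) = can(can⁻¹(1 ⊗ c) a)`:
    let ψL : C ⊗[k] A →ₗ[k] A ⊗[k] C :=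
      canE.toLinearMap ∘ₗ actQ
        ∘ₗ rTensor A (canE.symm.toLinearMap ∘ₗ (TensorProduct.mk k A C) (1 : A))
    -- the right action of `A` on `A ⊗ C` from Example 2.4(1):
    let RA : (A ⊗[k] C) ⊗[k] A →ₗ[k] A ⊗[k] C :=
      rTensor C (LinearMap.mul' k A)
        ∘ₗ (TensorProduct.assoc k A A C).symm.toLinearMap
        ∘ₗ lTensor A ψL
        ∘ₗ (TensorProduct.assoc k A C A).toLinearMap
    -- `x ↦ x^τ = Σ aᵢ can⁻¹(1 ⊗ cᵢ)`:
    let τ : A ⊗[k] C →ₗ[k] ((A ⊗[k] A) ⧸ galRel ρA) :=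
      lactQ ∘ₗ lTensor A (canE.symm.toLinearMap ∘ₗ (TensorProduct.mk k A C) (1 : A))
    ∀ x : A ⊗[k] C,
      (∀ a : A, rTensor C (LinearMap.mulLeft k a) x = RA (x ⊗ₜ[k] a))
        ↔ (∀ a : A, lactQ (a ⊗ₜ[k] τ x) = actQ (τ x ⊗ₜ[k] a)) := by
  intro ψL RA τ x
  have hleft (a : A) : canE (lactQ (a ⊗ₜ[k] τ x)) = rTensor C (LinearMap.mulLeft k a) x :=
    (can_lact (can := canE.toLinearMap) hcan hlactQ a (τ x)).trans
      (congrArg _ (can_lact_translationMap hcan hlactQ x))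
  have hright (a : A) : canE (actQ (τ x ⊗ₜ[k] a)) = RA (x ⊗ₜ[k] a) :=
    (entwiningRightAction_canonicalEntwining hcan hactQ hlactQ x a).symm
  refine forall_congr' fun a => ?_
  rw [← hleft, ← hright, canE.injective.eq_iff]
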